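/- arXiv:1608.03740 — 5 statements merged into one kernel-verified Lean document; each statement's English description precedes it below -/
import Mathlib

section
/- Let m, n, d, j be natural numbers with 0 < j ≤ d < min(m,n), c = m+n-2d-1, and let q_j(m,n,d) be the determinant of the d×d submatrix of the d×(d+1) matrix (C(c, m-i-k))_{1≤i≤d, 0≤k≤d} obtained by deleting its (j+1)-th column. Then q_j(m,n,d) = (C(d,j)·C(n-d+j-1, j) / C(m-1, j)) · q_0(m,n,d) in ℚ. -/
/-!
If `w` is a kernel vector of a `d × (d+1)` matrix, its maximal minors satisfy
`q₀ · w k = (-1)^k · q_k · w 0` (Cramer's rule). For `H(m,n,d)` such a vector is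
`w k = (-1)^k C(m-1-k, d-k) C(n-d-1+k, k)`: each entry of `H w` is a sum
`∑ₖ (-1)^k C(e+d-k, e) C(N+k, k) C(e+N+1, a-k)` with `e < a ≤ e+d`, which vanishes by
induction on `d` and `e + N`, using Pascal's rule in `e` and in the upper index, the symmetry
`k ↦ d-k` (swapping `e` and `N`) and, for `e = 0`, Chu–Vandermonde for `C(-(N+1), k)`.
The ratio `(-1)^j w j / w 0` then simplifies by `C(m-1,d) C(d,j) = C(m-1,j) C(m-1-j,d-j)`.
-/

open Finset

/-- Binomial coefficient `C(c, k)` with integer lower index, zero when `k < 0`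
(and automatically zero when `k > c`). -/
def binomZ (c : ℕ) (k : ℤ) : ℤ := if 0 ≤ k then (c.choose k.toNat : ℤ) else 0

/-- The `d × (d+1)` binomial Hankel matrix `H(m,n,d)` with entries
`C(m+n-2d-1, m-i-j)` for `1 ≤ i ≤ d`, `0 ≤ j ≤ d`. -/
def hankelH (m n d : ℕ) : Matrix (Fin d) (Fin (d + 1)) ℤ :=
  Matrix.of fun i j => binomZ (m + n - 2 * d - 1) ((m : ℤ) - ((i : ℕ) + 1) - (j : ℕ))

/-- `q_j(m,n,d)`: the maximal minor of `H(m,n,d)` obtained by deleting the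
`(j+1)`-th column (columns are indexed `0,…,d`). -/
def qMinor (m n d : ℕ) (j : Fin (d + 1)) : ℤ :=
  ((hankelH m n d).submatrix id j.succAbove).det

namespace Matrix

variable {R : Type*} [CommRing R] {d : ℕ}

theorem det_of_vecCons_single (A : Matrix (Fin d) (Fin (d + 1)) R) (k : Fin (d + 1)) :
    (of (vecCons (Pi.single k 1) (of.symm A))).det =
      (-1) ^ (k : ℕ) * (A.submatrix id k.succAbove).det := by
  rw [det_succ_row_zero, Finset.sum_eq_single k (fun j _ hjk => by simp [hjk]) (by simp)]
  simp only [Nat.succ_eq_add_one, of_apply, cons_val', Pi.single_eq_same, of_symm_apply,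
    cons_val_zero, mul_one]
  rfl

/-- Cramer's rule for `A` with the row `Pi.single 0 1` put on top: its adjugate column `0` is the
vector of signed maximal minors of `A`, and it maps `w` to `Pi.single 0 (w 0)`. -/
theorem det_submatrix_zero_succAbove_mul_eq (A : Matrix (Fin d) (Fin (d + 1)) R)
    {w : Fin (d + 1) → R} (hw : A *ᵥ w = 0) (k : Fin (d + 1)) :
    (A.submatrix id (0 : Fin (d + 1)).succAbove).det * w k =
      (-1) ^ (k : ℕ) * (A.submatrix id k.succAbove).det * w 0 := by
  set B : Matrix (Fin (d + 1)) (Fin (d + 1)) R := of (vecCons (Pi.single 0 1) (of.symm A))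
  have hBw : B *ᵥ w = Pi.single 0 (w 0) := by
    ext i
    refine Fin.cases ?_ (fun i => ?_) i
    · simp [B, mulVec]
    · simpa [B, mulVec] using congrFun hw i
  have hadj : B.adjugate k 0 = (of (vecCons (Pi.single k 1) (of.symm A))).det := by
    rw [adjugate_apply]
    congr 1
    ext i j
    refine Fin.cases ?_ (fun i => ?_) i <;> simp [B]
  have hB : B.det = (A.submatrix id (0 : Fin (d + 1)).succAbove).det := by
    simpa using det_of_vecCons_single A 0
  have key := congrFun (congrArg (· *ᵥ w) (adjugate_mul B)) k
  simp only [← mulVec_mulVec, hBw, mulVec_single, smul_mulVec, one_mulVec, Pi.smul_apply,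
    col_apply, MulOpposite.smul_eq_mul_unop, MulOpposite.unop_op, smul_eq_mul] at key
  rw [hadj, det_of_vecCons_single] at key
  rw [← hB, ← key]

end Matrix

theorem binomZ_of_neg {c : ℕ} {k : ℤ} (h : k < 0) : binomZ c k = 0 := by
  simp [binomZ, not_le.mpr h]

@[simp]
theorem binomZ_natCast (c k : ℕ) : binomZ c k = c.choose k := by
  simp [binomZ]

theorem binomZ_of_lt {c : ℕ} {k : ℤ} (h : (c : ℤ) < k) : binomZ c k = 0 := by
  lift k to ℕ using by omega
  simp [Nat.choose_eq_zero_of_lt (by omega : c < k)]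

theorem binomZ_succ (c : ℕ) (k : ℤ) : binomZ (c + 1) k = binomZ c k + binomZ c (k - 1) := by
  rcases lt_trichotomy k 0 with h | rfl | h
  · simp [binomZ_of_neg h, binomZ_of_neg (by omega : k - 1 < 0)]
  · simp [binomZ]
  · lift k to ℕ using h.le
    obtain ⟨k, rfl⟩ := Nat.exists_eq_add_one_of_ne_zero (by omega : k ≠ 0)
    rw [Nat.cast_add_one, add_sub_cancel_right, ← Nat.cast_add_one, binomZ_natCast,
      binomZ_natCast, binomZ_natCast, Nat.choose_succ_succ, Nat.cast_add,
      add_comm]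

theorem binomZ_symm (c : ℕ) (k : ℤ) : binomZ c k = binomZ c (c - k) := by
  rcases lt_or_ge k 0 with h | h
  · rw [binomZ_of_neg h, binomZ_of_lt (by omega)]
  rcases lt_or_ge (c : ℤ) k with h' | h'
  · rw [binomZ_of_lt h', binomZ_of_neg (by omega)]
  lift k to ℕ using h
  rw [← Nat.cast_sub (by omega), binomZ_natCast, binomZ_natCast, Nat.choose_symm (by omega)]

theorem sum_range_neg_one_pow_mul_choose_mul_choose (N a : ℕ) (ha : 0 < a) :
    ∑ k ∈ range (a + 1), (-1 : ℤ) ^ k * (N + k).choose k * (N + 1).choose (a - k) = 0 := by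
  have h := Ring.add_choose_eq (r := -((N + 1 : ℕ) : ℤ)) (s := ((N + 1 : ℕ) : ℤ)) a
    (Commute.all _ _)
  rw [neg_add_cancel, Ring.choose_zero_pos ℤ ha, Nat.sum_antidiagonal_eq_sum_range_succ_mk] at h
  rw [h]
  refine sum_congr rfl fun k _ => ?_
  dsimp only
  rw [Ring.choose_neg, Ring.choose_natCast,
    show ((N + 1 : ℕ) : ℤ) + k - 1 = ((N + k : ℕ) : ℤ) by push_cast; ring,
    Ring.choose_natCast]
  simp [Int.negOnePow_def, Units.smul_def]

theorem neg_one_pow_sub_of_le {d k : ℕ} (h : k ≤ d) :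
    (-1 : ℤ) ^ (d - k) = (-1) ^ d * (-1) ^ k := by
  obtain ⟨j, rfl⟩ := Nat.exists_eq_add_of_le h
  rw [Nat.add_sub_cancel_left, pow_add, mul_right_comm, ← mul_pow]
  simp

/-- For `e = m-1-d`, `N = n-d-1`, `c = m+n-2d-1` and `a = m-i`, this is the `i`-th entry of
`hankelH m n d` applied to `hankelKernel m n d`. -/
def kernelSum (d e N c : ℕ) (a : ℤ) : ℤ :=
  ∑ k ∈ range (d + 1), (-1) ^ k * (e + (d - k)).choose e * (N + k).choose k * binomZ c (a - k)

theorem kernelSum_pascal (d e N c : ℕ) (a : ℤ) :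
    kernelSum d e N (c + 1) a = kernelSum d e N c a + kernelSum d e N c (a - 1) := by
  simp only [kernelSum, ← sum_add_distrib, binomZ_succ, sub_right_comm _ (1 : ℤ)]
  exact sum_congr rfl fun k _ => by ring

theorem kernelSum_succ_succ (d e N c : ℕ) (a : ℤ) :
    kernelSum (d + 1) (e + 1) N c a = kernelSum d (e + 1) N c a + kernelSum (d + 1) e N c a := by
  rw [kernelSum, kernelSum, kernelSum, sum_range_succ, sum_range_succ _ (d + 1),
    Nat.sub_self, add_zero, add_zero, Nat.choose_self, Nat.choose_self,
    ← add_assoc (∑ k ∈ range (d + 1), _), ← sum_add_distrib]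
  congr 1
  refine sum_congr rfl fun k hk => ?_
  have hk : k ≤ d := Nat.lt_succ_iff.mp (mem_range.mp hk)
  rw [show e + 1 + (d + 1 - k) = e + (d + 1 - k) + 1 by omega, Nat.choose_succ_succ',
    show e + (d + 1 - k) = e + 1 + (d - k) by omega]
  push_cast
  ring

theorem kernelSum_symm (d e N c : ℕ) (a : ℤ) :
    kernelSum d e N c a = (-1) ^ d * kernelSum d N e c (c + d - a) := by
  rw [kernelSum, kernelSum, mul_sum, ← sum_range_reflect]
  refine sum_congr rfl fun k hk => ?_
  have hk : k ≤ d := Nat.lt_succ_iff.mp (mem_range.mp hk)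
  rw [Nat.add_sub_cancel, Nat.sub_sub_self hk, neg_one_pow_sub_of_le hk, binomZ_symm c,
    Nat.choose_symm_add, Nat.choose_symm_add (a := N),
    show (c : ℤ) - (a - (d - k : ℕ)) = c + d - a - k by push_cast [Nat.cast_sub hk]; ring]
  ring

theorem kernelSum_zero_left_eq_zero (d N : ℕ) {a : ℤ} (h₁ : 1 ≤ a) (h₂ : a ≤ d) :
    kernelSum d 0 N (0 + N + 1) a = 0 := by
  lift a to ℕ using by omega
  have hsub : range (a + 1) ⊆ range (d + 1) := range_subset_range.mpr (by omega)
  rw [kernelSum, ← sum_subset hsub fun k _ hk => by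
    rw [binomZ_of_neg (by simp at hk; omega), mul_zero]]
  rw [← sum_range_neg_one_pow_mul_choose_mul_choose N a (by omega)]
  refine sum_congr rfl fun k hk => ?_
  rw [← Nat.cast_sub (by simp at hk; omega), binomZ_natCast, Nat.choose_zero_right, zero_add]
  push_cast
  ring

theorem kernelSum_one_eq_zero (e N : ℕ) : kernelSum 1 e N (e + N + 1) (e + 1) = 0 := by
  have key : ((e + N + 1).choose (e + 1) * (e + 1) : ℤ) = (e + N + 1).choose e * (N + 1) := by
    exact_mod_cast (Nat.choose_succ_right_eq (e + N + 1) e).trans (by congr 1; omega)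
  simp only [kernelSum, sum_range_succ, sum_range_zero]
  rw [show (e : ℤ) + 1 - (0 : ℕ) = (e + 1 : ℕ) by push_cast; ring,
    show (e : ℤ) + 1 - (1 : ℕ) = e by push_cast; ring, binomZ_natCast, binomZ_natCast]
  simp only [Int.reduceNeg, pow_zero, tsub_zero, Nat.choose_succ_self_right, Nat.cast_add,
    Nat.cast_one, one_mul, add_zero, Nat.choose_zero_right, mul_one, zero_add, pow_one, tsub_self,
    Nat.choose_self, Nat.choose_one_right, neg_mul, neg_add_rev]
  linear_combination key

theorem kernelSum_eq_neg_one_pow_mul_kernelSum_swap (d e N : ℕ) {a : ℤ} (ha : a = e + d) :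
    kernelSum d e N (e + N + 1) a = (-1) ^ d * kernelSum d N e (N + e + 1) (N + 1) := by
  rw [kernelSum_symm, add_comm N e, ha]
  push_cast
  ring_nf

theorem kernelSum_succ_eq_zero_of_lt (d : ℕ) (hd : 1 ≤ d)
    (ih : ∀ (e N : ℕ) {a : ℤ}, e + 1 ≤ a → a ≤ e + d →
      kernelSum d e N (e + N + 1) a = 0)
    (e N : ℕ) {a : ℤ} (h₁ : e + 1 ≤ a) (h₂ : a ≤ e + d) :
    kernelSum (d + 1) e N (e + N + 1) a = 0 := by
  cases e with
  | zero => exact kernelSum_zero_left_eq_zero (d + 1) N (by omega) (by omega)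
  | succ e =>
    have below : ∀ b : ℤ, e + 1 ≤ b → b ≤ e + d + 1 →
        kernelSum (d + 1) e N (e + N + 1) b = 0 := by
      intro b hb₁ hb₂
      -- the top of the window is the bottom of the swapped window, where `e + N` is smaller
      rcases hb₂.lt_or_eq with hb₂ | hb₂
      · exact kernelSum_succ_eq_zero_of_lt d hd ih e N hb₁ (by omega)
      · rw [kernelSum_eq_neg_one_pow_mul_kernelSum_swap (d + 1) e N (by push_cast; omega),
          kernelSum_succ_eq_zero_of_lt d hd ih N e (by omega) (by omega), mul_zero]
    rw [kernelSum_succ_succ,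
      ih (e + 1) N (by push_cast at h₁ ⊢; omega) (by push_cast at h₂ ⊢; omega),
      show e + 1 + N + 1 = e + N + 1 + 1 by ring, kernelSum_pascal,
      below a (by push_cast at h₁; omega) (by push_cast at h₂; omega),
      below (a - 1) (by push_cast at h₁; omega) (by push_cast at h₂; omega)]
    simp
termination_by e + N

theorem kernelSum_eq_zero (d e N : ℕ) {a : ℤ} (h₁ : e + 1 ≤ a) (h₂ : a ≤ e + d) :
    kernelSum d e N (e + N + 1) a = 0 := by
  induction d generalizing e N a with
  | zero => omega
  | succ d ih =>
    rcases Nat.eq_zero_or_pos d with rfl | hd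
    · obtain rfl : a = e + 1 := by push_cast at h₂; omega
      exact kernelSum_one_eq_zero e N
    rcases h₂.lt_or_eq with h₂ | h₂
    · exact kernelSum_succ_eq_zero_of_lt d hd ih e N h₁ (by push_cast at h₂; omega)
    · rw [kernelSum_eq_neg_one_pow_mul_kernelSum_swap (d + 1) e N h₂,
        kernelSum_succ_eq_zero_of_lt d hd ih N e (by omega) (by omega), mul_zero]

def hankelKernel (m n d : ℕ) (k : Fin (d + 1)) : ℤ :=
  (-1) ^ (k : ℕ) * (m - 1 - k).choose (d - k) * (n - d - 1 + k).choose k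

theorem hankelH_mulVec_hankelKernel {m n d : ℕ} (hdm : d < m) (hdn : d < n) :
    (hankelH m n d).mulVec (hankelKernel m n d) = 0 := by
  ext i
  have h := kernelSum_eq_zero d (m - 1 - d) (n - d - 1) (a := m - (i + 1))
    (by have := i.isLt; omega) (by omega)
  rw [kernelSum, show m - 1 - d + (n - d - 1) + 1 = m + n - 2 * d - 1 by omega] at h
  rw [Pi.zero_apply, ← h, Matrix.mulVec, dotProduct, ← Fin.sum_univ_eq_sum_range]
  refine sum_congr rfl fun k _ => ?_
  have hk : (k : ℕ) ≤ d := Nat.lt_succ_iff.mp k.isLt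
  rw [hankelH, hankelKernel, Matrix.of_apply, show m - 1 - d + (d - k) = m - 1 - k by omega,
    ← Nat.choose_symm (by omega), show m - 1 - k - (d - k) = m - 1 - d by omega]
  ring

theorem qMinor_zero_mul_choose_mul_choose {m n d j : ℕ} (hjd : j ≤ d) (hdm : d < m)
    (hdn : d < n) :
    qMinor m n d 0 * ((m - 1 - j).choose (d - j) * (n - d - 1 + j).choose j) =
      qMinor m n d ⟨j, Nat.lt_succ_of_le hjd⟩ * (m - 1).choose d := by
  have h : qMinor m n d 0 * hankelKernel m n d ⟨j, Nat.lt_succ_of_le hjd⟩ =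
      (-1) ^ j * qMinor m n d ⟨j, Nat.lt_succ_of_le hjd⟩ * hankelKernel m n d 0 :=
    Matrix.det_submatrix_zero_succAbove_mul_eq _ (hankelH_mulVec_hankelKernel hdm hdn) _
  simp only [hankelKernel, Fin.val_zero, pow_zero, one_mul, Nat.sub_zero, Nat.add_zero,
    Nat.choose_zero_right, Nat.cast_one, mul_one] at h
  exact mul_left_cancel₀ (pow_ne_zero j (neg_ne_zero.mpr one_ne_zero)) (by linear_combination h)

theorem qMinor_mul_choose {m n d j : ℕ} (hjd : j ≤ d) (hdm : d < m) (hdn : d < n) :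
    qMinor m n d ⟨j, Nat.lt_succ_of_le hjd⟩ * (m - 1).choose j =
      d.choose j * (n - d - 1 + j).choose j * qMinor m n d 0 := by
  have hchoose : ((m - 1).choose d * d.choose j : ℤ) =
      (m - 1).choose j * (m - 1 - j).choose (d - j) := by
    exact_mod_cast Nat.choose_mul hjd
  have hd_pos : ((m - 1).choose d : ℤ) ≠ 0 := by exact_mod_cast (Nat.choose_pos (by omega)).ne'
  refine mul_left_cancel₀ hd_pos ?_
  linear_combination (m - 1).choose j * (qMinor_zero_mul_choose_mul_choose hjd hdm hdn).symm -
    (n - d - 1 + j).choose j * qMinor m n d 0 * hchoose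

theorem q_j_eval_general (m n d j : ℕ) (hjd : j ≤ d) (hdm : d < m) (hdn : d < n) :
    ((qMinor m n d ⟨j, Nat.lt_succ_of_le hjd⟩ : ℤ) : ℚ) =
      ((d.choose j : ℚ) * ((n - d + j - 1).choose j : ℚ) / ((m - 1).choose j : ℚ)) *
        ((qMinor m n d 0 : ℤ) : ℚ) := by
  have hj_pos : ((m - 1).choose j : ℚ) ≠ 0 := by exact_mod_cast (Nat.choose_pos (by omega)).ne'
  rw [show n - d + j - 1 = n - d - 1 + j by omega, div_mul_eq_mul_div, eq_div_iff hj_pos]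
  exact_mod_cast qMinor_mul_choose hjd hdm hdn

/-- `q_j(m,n,d)` in terms of `q_0(m,n,d)`. -/
theorem q_j_eval (m n d j : ℕ) (hj : 0 < j) (hjd : j ≤ d) (hdm : d < m) (hdn : d < n) :
    ((qMinor m n d ⟨j, Nat.lt_succ_of_le hjd⟩ : ℤ) : ℚ) =
      ((d.choose j : ℚ) * ((n - d + j - 1).choose j : ℚ) / ((m - 1).choose j : ℚ)) *
        ((qMinor m n d 0 : ℤ) : ℚ) :=
  q_j_eval_general m n d j hjd hdm hdn
end

section
/- Let m, n, d be natural numbers with 0 < d < min(m,n), c = m+n-2d-1, and define k_j = C(d,j)·C(n-d+j-1,j)/C(m-1,j) for 0 ≤ j ≤ d. Then the vector (k_0, -k_1, k_2, ..., (-1)^d k_d) ∈ ℚ^(d+1) lies in the kernel of the d×(d+1) matrix with entries C(c, m-i-j) for 1 ≤ i ≤ d, 0 ≤ j ≤ d, i.e., ∑_{j=0}^{d} (-1)^j C(c, m-j-i) k_j = 0 for all 1 ≤ i ≤ d. -/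
/-
Write m = d + a + 1 and n = d + b + 1. Up to the factor C(a+d, d), the i-th row sum is
S(a, b, s) = ∑_{j+k=d} (-1)^j C(b+j, j) C(a+k, k) C(a+b+1, s-j) at s = a+d+1-i.
Pascal's rule in the three binomials gives S(a+1, b+1, s) = S(a+1, b, s) + S(a, b+1, s-1),
which maps the family of claims into itself, so it suffices to treat a = 0 and b = 0.
The reflection (j, k) ↦ (k, j) turns b = 0 into a = 0, and for a = 0 the sum is a
coefficient of (1+x)^(-(b+1)) (1+x)^(b+1) = 1, i.e. Vandermonde's identity for
C(-(b+1), ·) and C(b+1, ·).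
-/

open Finset

/-- Binomial coefficient `C(c, k)` with integer lower index, zero when `k < 0`
(and automatically zero when `k > c`), as a rational number. -/
def binomQ (c : ℕ) (k : ℤ) : ℚ := if 0 ≤ k then (c.choose k.toNat : ℚ) else 0

lemma binomQ_of_neg (c : ℕ) {k : ℤ} (hk : k < 0) : binomQ c k = 0 := by
  simp [binomQ, hk]

lemma binomQ_natCast (c k : ℕ) : binomQ c k = c.choose k := by
  simp [binomQ]

lemma binomQ_succ (c : ℕ) (k : ℤ) : binomQ (c + 1) k = binomQ c k + binomQ c (k - 1) := by
  rcases lt_trichotomy k 0 with hk | rfl | hk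
  · simp [binomQ_of_neg, hk, Int.sub_neg_of_lt (hk.trans zero_lt_one)]
  · simp [binomQ]
  · lift k to ℕ using hk.le
    obtain ⟨k, rfl⟩ := Nat.exists_eq_add_one_of_ne_zero (by omega : k ≠ 0)
    rw [show ((k + 1 : ℕ) : ℤ) - 1 = k by omega, binomQ_natCast, binomQ_natCast, binomQ_natCast,
      Nat.choose_succ_succ', Nat.cast_add, add_comm]

lemma binomQ_symm (c : ℕ) (k : ℤ) : binomQ c (c - k) = binomQ c k := by
  rcases lt_or_ge k 0 with hk | hk
  · lift c - k to ℕ using (by omega) with l hl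
    rw [binomQ_of_neg c hk, binomQ_natCast, Nat.choose_eq_zero_of_lt (by omega), Nat.cast_zero]
  rcases lt_or_ge (c : ℤ) k with hc | hc
  · lift k to ℕ using hk
    rw [binomQ_of_neg c (by omega), binomQ_natCast, Nat.choose_eq_zero_of_lt (by omega),
      Nat.cast_zero]
  lift k to ℕ using hk
  rw [← Nat.cast_sub (by omega), binomQ_natCast, binomQ_natCast, Nat.choose_symm (by omega)]

theorem sum_antidiagonal_neg_one_pow_mul_choose_mul_choose (N : ℕ) {s : ℕ} (hs : s ≠ 0) :
    ∑ p ∈ antidiagonal s, (-1 : ℤ) ^ p.1 * (N + p.1).choose p.1 * (N + 1).choose p.2 = 0 := by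
  have h := Ring.add_choose_eq (R := ℤ) s (Commute.all (-((N : ℤ) + 1)) (N + 1))
  rw [neg_add_cancel, Ring.choose_zero_pos ℤ (Nat.pos_of_ne_zero hs)] at h
  rw [h]
  refine sum_congr rfl fun p _ => ?_
  rw [Ring.choose_neg, ← Nat.cast_add_one, Ring.choose_natCast, Units.smul_def,
    Int.coe_negOnePow_natCast, show ((N + 1 : ℕ) : ℤ) + p.1 - 1 = (N + p.1 : ℕ) by omega,
    Ring.choose_natCast, smul_eq_mul]

lemma cast_choose_succ_add_sub_cast_choose_add (n j : ℕ) :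
    ((n + 1 + (j + 1)).choose (j + 1) : ℚ) - (n + (j + 1)).choose (j + 1) =
      (n + 1 + j).choose j := by
  rw [show n + 1 + (j + 1) = n + 1 + j + 1 by ring, Nat.choose_succ_succ',
    show n + (j + 1) = n + 1 + j by ring, Nat.cast_add, add_sub_cancel_right]

def hankelRowSum (d a b : ℕ) (s : ℤ) : ℚ :=
  ∑ p ∈ antidiagonal d, (-1) ^ p.1 * ((b + p.1).choose p.1 : ℚ) * ((a + p.2).choose p.2 : ℚ) *
    binomQ (a + b + 1) (s - p.1)

lemma hankelRowSum_zero_left (d b : ℕ) {s : ℕ} (hs : s ≠ 0) (hsd : s ≤ d) :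
    hankelRowSum d 0 b s = 0 := by
  have htail : ∀ j ∈ range (d + 1), j ∉ range (s + 1) →
      (-1) ^ j * ((b + j).choose j : ℚ) * binomQ (b + 1) (s - j) = 0 := fun j _ hj => by
    rw [binomQ_of_neg _ (by simp at hj; omega), mul_zero]
  calc hankelRowSum d 0 b s
      = ∑ j ∈ range (d + 1), (-1) ^ j * ((b + j).choose j : ℚ) * binomQ (b + 1) (s - j) := by
        simp [hankelRowSum, Nat.sum_antidiagonal_eq_sum_range_succ_mk]
    _ = ∑ j ∈ range (s + 1), (-1) ^ j * ((b + j).choose j : ℚ) * binomQ (b + 1) (s - j) :=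
        (sum_subset (range_subset_range.2 (by omega)) htail).symm
    _ = ∑ p ∈ antidiagonal s, (-1) ^ p.1 * ((b + p.1).choose p.1 : ℚ) *
          (b + 1).choose p.2 := by
        rw [Nat.sum_antidiagonal_eq_sum_range_succ_mk]
        refine sum_congr rfl fun j hj => ?_
        rw [← Nat.cast_sub (by simp at hj; omega), binomQ_natCast]
    _ = 0 := by exact_mod_cast sum_antidiagonal_neg_one_pow_mul_choose_mul_choose b hs

lemma hankelRowSum_swap (d a b : ℕ) (s : ℤ) :
    hankelRowSum d a b s = (-1) ^ d * hankelRowSum d b a (a + b + d + 1 - s) := by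
  rw [hankelRowSum, hankelRowSum, mul_sum, ← Nat.sum_antidiagonal_swap]
  refine sum_congr rfl fun p hp => ?_
  rw [HasAntidiagonal.mem_antidiagonal] at hp
  subst hp
  have hsign : (-1 : ℚ) ^ p.2 = (-1) ^ (p.1 + p.2) * (-1) ^ p.1 := by
    rw [← pow_add, show p.1 + p.2 + p.1 = p.2 + 2 * p.1 by ring, pow_add, pow_mul, neg_one_sq,
      one_pow, mul_one]
  rw [Prod.fst_swap, Prod.snd_swap, ← binomQ_symm, add_comm b a, hsign,
    show ((a + b + 1 : ℕ) : ℤ) - (s - p.2) = a + b + (p.1 + p.2 : ℕ) + 1 - s - p.1 by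
      push_cast; ring]
  ring

lemma hankelRowSum_succ_succ (d a b : ℕ) (s : ℤ) :
    hankelRowSum d (a + 1) (b + 1) s =
      hankelRowSum d (a + 1) b s + hankelRowSum d a (b + 1) (s - 1) := by
  have pascal : hankelRowSum d (a + 1) (b + 1) s =
      ∑ p ∈ antidiagonal d, (-1) ^ p.1 * ((b + 1 + p.1).choose p.1 : ℚ) *
        ((a + 1 + p.2).choose p.2 : ℚ) * binomQ (a + b + 2) (s - p.1) +
      ∑ p ∈ antidiagonal d, (-1) ^ p.1 * ((b + 1 + p.1).choose p.1 : ℚ) *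
        ((a + 1 + p.2).choose p.2 : ℚ) * binomQ (a + b + 2) (s - 1 - p.1) := by
    rw [hankelRowSum, ← sum_add_distrib, show a + 1 + (b + 1) + 1 = a + b + 2 + 1 by ring]
    refine sum_congr rfl fun p _ => ?_
    rw [binomQ_succ, sub_right_comm]
    ring
  -- Pascal's rule in `b` and in `a` leaves two remainders, which cancel once `j`, resp. `k`,
  -- is shifted by one.
  have cancel :
      ∑ p ∈ antidiagonal d, (-1) ^ p.1 *
          (((b + 1 + p.1).choose p.1 : ℚ) - (b + p.1).choose p.1) *
          ((a + 1 + p.2).choose p.2 : ℚ) * binomQ (a + b + 2) (s - p.1) +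
        ∑ p ∈ antidiagonal d, (-1) ^ p.1 * ((b + 1 + p.1).choose p.1 : ℚ) *
          (((a + 1 + p.2).choose p.2 : ℚ) - (a + p.2).choose p.2) *
          binomQ (a + b + 2) (s - 1 - p.1) = 0 := by
    cases d with
    | zero => simp
    | succ d =>
      rw [Nat.sum_antidiagonal_succ, Nat.sum_antidiagonal_succ']
      simp only [Nat.choose_zero_right, sub_self, mul_zero, zero_mul, zero_add,
        cast_choose_succ_add_sub_cast_choose_add, ← sum_add_distrib]
      refine sum_eq_zero fun p _ => ?_
      rw [Nat.cast_add_one, sub_add_eq_sub_sub_swap]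
      ring
  rw [pascal, hankelRowSum, hankelRowSum, show a + (b + 1) + 1 = a + b + 2 by ring,
    show a + 1 + b + 1 = a + b + 2 by ring]
  simp only [mul_sub, sub_mul, sum_sub_distrib] at cancel
  linear_combination cancel

lemma hankelRowSum_eq_zero (d a b : ℕ) {i : ℕ} (hi : i ≠ 0) (hid : i ≤ d) :
    hankelRowSum d a b (a + d + 1 - i) = 0 := by
  induction a generalizing b with
  | zero =>
    rw [show ((0 : ℕ) : ℤ) + d + 1 - i = (d + 1 - i : ℕ) by omega]
    exact hankelRowSum_zero_left d b (by omega) (by omega)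
  | succ a iha =>
    induction b with
    | zero =>
      rw [hankelRowSum_swap,
        show ((a + 1 : ℕ) : ℤ) + (0 : ℕ) + d + 1 - ((a + 1 : ℕ) + d + 1 - i) = i by push_cast; ring,
        hankelRowSum_zero_left d (a + 1) hi hid, mul_zero]
    | succ b ihb =>
      rw [hankelRowSum_succ_succ, ihb,
        show ((a + 1 : ℕ) : ℤ) + d + 1 - i - 1 = a + d + 1 - i by push_cast; ring, iha, add_zero]

lemma cast_choose_div_cast_choose_add (a : ℕ) {d j : ℕ} (hj : j ≤ d) :
    (d.choose j : ℚ) / (a + d).choose j = (a + (d - j)).choose (d - j) / (a + d).choose d := by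
  rw [div_eq_div_iff (by positivity [Nat.choose_pos (by omega : j ≤ a + d)])
    (by positivity [Nat.choose_pos (by omega : d ≤ a + d)]),
    show a + (d - j) = a + d - j by omega]
  exact_mod_cast by rw [mul_comm, Nat.choose_mul hj, mul_comm]

theorem kernel_vector_general (m n d : ℕ) (hdm : d < m) (hdn : d < n) :
    ∀ i : ℕ, 1 ≤ i → i ≤ d →
      ∑ j ∈ Finset.range (d + 1),
          (-1) ^ j * binomQ (m + n - 2 * d - 1) ((m : ℤ) - j - i) *
            ((d.choose j : ℚ) * ((n - d + j - 1).choose j : ℚ) / ((m - 1).choose j : ℚ)) =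
        0 := by
  intro i hi hid
  obtain ⟨a, rfl⟩ := Nat.exists_eq_add_of_lt hdm
  obtain ⟨b, rfl⟩ := Nat.exists_eq_add_of_lt hdn
  have hrow := hankelRowSum_eq_zero d a b (by omega) hid
  rw [hankelRowSum, Nat.sum_antidiagonal_eq_sum_range_succ_mk] at hrow
  calc _ = ((a + d).choose d : ℚ)⁻¹ * ∑ j ∈ range (d + 1), (-1) ^ j * ((b + j).choose j : ℚ) *
          ((a + (d - j)).choose (d - j) : ℚ) * binomQ (a + b + 1) (a + d + 1 - i - j) := by
        rw [mul_sum]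
        refine sum_congr rfl fun j hj => ?_
        rw [show d + a + 1 + (d + b + 1) - 2 * d - 1 = a + b + 1 by omega,
          show d + b + 1 - d + j - 1 = b + j by omega, show d + a + 1 - 1 = a + d by omega,
          mul_div_right_comm,
          cast_choose_div_cast_choose_add a (Nat.lt_succ_iff.mp (mem_range.mp hj))]
        push_cast
        rw [show (d : ℤ) + a + 1 - j - i = a + d + 1 - i - j by ring]
        ring
    _ = 0 := by rw [hrow, mul_zero]

/-- The vector `((-1)^j k_j)_j` with `k_j = C(d,j)C(n-d+j-1,j)/C(m-1,j)` lies in the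
kernel of the binomial Hankel matrix `(C(c, m-i-j))_{1≤i≤d, 0≤j≤d}`. -/
theorem kernel_vector (m n d : ℕ) (hd : 0 < d) (hdm : d < m) (hdn : d < n) :
    ∀ i : ℕ, 1 ≤ i → i ≤ d →
      ∑ j ∈ Finset.range (d + 1),
          (-1) ^ j * binomQ (m + n - 2 * d - 1) ((m : ℤ) - j - i) *
            ((d.choose j : ℚ) * ((n - d + j - 1).choose j : ℚ) / ((m - 1).choose j : ℚ)) =
        0 :=
  kernel_vector_general m n d hdm hdn
end

section
/- Let n, m, d be natural numbers with 0 < d < min(m,n). Then the determinant of the (m-d)×(m-d) matrix with (i,j) entry C(n, d-i+j) for 1 ≤ i,j ≤ m-d equals ∏_{i=1}^{d} ((i-1)!·(m+n-2d-1+i)!) / ((m-i)!·(n-i)!). -/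
/-!
Write `n = d + e` and `N = m - d`. Scaling row `i` by `(d+N-1-i)! (e+i)!` turns `C(n, d+j-i)` into
`p_j(i)`, where `p_j(x) = n! (d+N-1-x)^{\underline{N-1-j}} (x+e)^{\underline{j}}` has degree `N - 1`.
Since `det (p_j(x_i)) = det (vandermonde x) * det (coefficients of p_j)`, this determinant does not
change when all `x_i` are translated; at `x_i = i - e` the matrix is lower triangular with diagonal
`(n+N-1-i)! i!`. The resulting product of factorials is MacMahon's box formula
`G(d) G(e) G(N) G(d+e+N) / (G(d+e) G(d+N) G(e+N))` with `G(a) = ∏_{k<a} k!`, which regroups into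
the stated product over `i < d`.
-/

open Finset

open Polynomial Matrix Nat

theorem binomQ_mul_factorial_mul_factorial {n A B α β : ℕ} (h : A + B = n + α + β) :
    binomQ n ((A : ℤ) - α) * A ! * B ! = n ! * A.descFactorial α * B.descFactorial β := by
  rcases lt_or_ge A α with hA | hA
  · rw [binomQ, if_neg (by omega), descFactorial_eq_zero_iff_lt.mpr hA]
    simp
  obtain ⟨k, rfl⟩ := exists_add_of_le hA
  rcases lt_or_ge n k with hk | hk
  · simp [binomQ, descFactorial_eq_zero_iff_lt.mpr (show B < β by omega),
      choose_eq_zero_of_lt hk]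
  have hα := factorial_mul_descFactorial (show α ≤ α + k by omega)
  have hβ := factorial_mul_descFactorial (show β ≤ B by omega)
  have hn := choose_mul_factorial_mul_factorial hk
  rw [Nat.add_sub_cancel_left] at hα
  rw [show B - β = n - k by omega] at hβ
  rw [binomQ, if_pos (by omega), show ((α + k : ℕ) - α : ℤ).toNat = k by omega, ← hα, ← hβ, ← hn]
  push_cast
  ring

theorem det_eval_eq_det_vandermonde_mul {R : Type*} [CommRing R] {N : ℕ} (p : Fin N → R[X])
    (hp : ∀ j, (p j).natDegree < N) (x : Fin N → R) :
    (of fun i j => (p j).eval (x i)).det =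
      (vandermonde x).det * (of fun k j : Fin N => (p j).coeff k).det := by
  rw [← det_mul]
  congr 1
  ext i j
  rw [of_apply, mul_apply, eval_eq_sum_range' (hp j), ← Fin.sum_univ_eq_sum_range]
  simp [vandermonde_apply, mul_comm]

theorem det_eval_add {R : Type*} [CommRing R] {N : ℕ} (p : Fin N → R[X])
    (hp : ∀ j, (p j).natDegree < N) (x : Fin N → R) (c : R) :
    (of fun i j => (p j).eval (x i + c)).det = (of fun i j => (p j).eval (x i)).det := by
  rw [det_eval_eq_det_vandermonde_mul p hp, det_eval_eq_det_vandermonde_mul p hp,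
    det_vandermonde_add]

noncomputable def hankelPoly (d e N j : ℕ) : ℚ[X] :=
  C ((d + e)! : ℚ) * (descPochhammer ℚ (N - 1 - j)).comp (C ((d + N - 1 : ℕ) : ℚ) - X) *
    (descPochhammer ℚ j).comp (X + C (e : ℚ))

theorem hankelPoly_natDegree_lt {d e N j : ℕ} (hj : j < N) :
    (hankelPoly d e N j).natDegree < N := by
  unfold hankelPoly
  have h₁ : ((descPochhammer ℚ (N - 1 - j)).comp (C ((d + N - 1 : ℕ) : ℚ) - X)).natDegree
      = N - 1 - j := by
    rw [natDegree_comp, descPochhammer_natDegree, sub_eq_neg_add, natDegree_add_C, natDegree_neg,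
      natDegree_X, mul_one]
  have h₂ : ((descPochhammer ℚ j).comp (X + C (e : ℚ))).natDegree = j := by
    rw [natDegree_comp, descPochhammer_natDegree, natDegree_X_add_C, mul_one]
  calc _ ≤ _ := natDegree_mul_le
    _ ≤ 0 + (N - 1 - j) + j := by
      gcongr
      · exact natDegree_mul_le.trans (by rw [natDegree_C, h₁])
      · exact h₂.le
    _ < N := by omega

theorem hankelPoly_eval (d e N j : ℕ) (x : ℚ) :
    (hankelPoly d e N j).eval x = (d + e)! * (descPochhammer ℚ (N - 1 - j)).eval
      (((d + N - 1 : ℕ) : ℚ) - x) * (descPochhammer ℚ j).eval (x + e) := by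
  simp [hankelPoly, eval_comp]

theorem factorial_mul_binomQ_eq_hankelPoly_eval {d e N i j : ℕ} (hi : i < N) (hj : j < N) :
    ((d + N - 1 - i)! * (e + i)! : ℚ) * binomQ (d + e) ((d : ℤ) - (i + 1) + (j + 1)) =
      (hankelPoly d e N j).eval (i : ℚ) := by
  rw [hankelPoly_eval, ← Nat.cast_sub (by omega), add_comm (i : ℚ), ← Nat.cast_add,
    descPochhammer_eval_eq_descFactorial, descPochhammer_eval_eq_descFactorial,
    ← binomQ_mul_factorial_mul_factorial (n := d + e) (α := N - 1 - j) (β := j) (by omega)]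
  rw [show ((d + N - 1 - i : ℕ) : ℤ) - (N - 1 - j : ℕ) = (d : ℤ) - (i + 1) + (j + 1) by omega]
  ring

theorem hankelPoly_eval_sub {d e N i : ℕ} (hi : i < N) (j : ℕ) :
    (hankelPoly d e N j).eval ((i : ℚ) - e) =
      (d + e)! * (d + e + N - 1 - i).descFactorial (N - 1 - j) * i.descFactorial j := by
  rw [hankelPoly_eval, sub_add_cancel, ← descPochhammer_eval_eq_descFactorial,
    ← descPochhammer_eval_eq_descFactorial]
  congr 3
  push_cast [show i ≤ d + e + N - 1 by omega, show 1 ≤ d + N by omega, show 1 ≤ d + e + N by omega]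
  ring

theorem det_hankel_mul_prod (d e N : ℕ) :
    (of fun i j : Fin N => binomQ (d + e) ((d : ℤ) - ((i : ℕ) + 1) + ((j : ℕ) + 1))).det *
        ∏ i ∈ range N, ((d + N - 1 - i)! * (e + i)! : ℚ) =
      ∏ i ∈ range N, ((d + e + N - 1 - i)! * i ! : ℚ) := by
  have hdeg (j : Fin N) : (hankelPoly d e N j).natDegree < N := hankelPoly_natDegree_lt j.isLt
  calc _ = (of fun i j : Fin N => (hankelPoly d e N j).eval ((i : ℕ) : ℚ)).det := by
        rw [mul_comm, ← Fin.prod_univ_eq_prod_range, ← det_mul_column]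
        congr 1
        ext i j
        exact factorial_mul_binomQ_eq_hankelPoly_eval i.isLt j.isLt
    _ = (of fun i j : Fin N => (hankelPoly d e N j).eval (((i : ℕ) : ℚ) + -e)).det :=
        (det_eval_add _ hdeg _ _).symm
    _ = _ := by
        rw [det_of_isLowerTriangular, ← Fin.prod_univ_eq_prod_range]
        · refine prod_congr rfl fun i _ => ?_
          rw [of_apply, ← sub_eq_add_neg, hankelPoly_eval_sub i.isLt, descFactorial_self,
            ← factorial_mul_descFactorial (show N - 1 - i ≤ d + e + N - 1 - i by omega)]
          rw [show d + e + N - 1 - i - (N - 1 - i) = d + e by omega]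
          push_cast
          ring
        · intro i j hij
          rw [of_apply, ← sub_eq_add_neg, hankelPoly_eval_sub i.isLt,
            descFactorial_eq_zero_iff_lt.mpr (show (i : ℕ) < j from hij)]
          simp

def prodFactorials (a : ℕ) : ℚ := ∏ k ∈ range a, (k ! : ℚ)

theorem prodFactorials_ne_zero (a : ℕ) : prodFactorials a ≠ 0 :=
  prod_ne_zero_iff.mpr fun k _ => by positivity

theorem prod_range_factorial_add (a L : ℕ) :
    ∏ i ∈ range L, ((a + i)! : ℚ) = prodFactorials (a + L) / prodFactorials a := by
  rw [eq_div_iff (prodFactorials_ne_zero a), prodFactorials, prodFactorials, prod_range_add,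
    mul_comm]

theorem prod_range_factorial_reflect (a L : ℕ) :
    ∏ i ∈ range L, ((a + L - 1 - i)! : ℚ) = prodFactorials (a + L) / prodFactorials a := by
  rw [← prod_range_factorial_add, ← prod_range_reflect]
  refine prod_congr rfl fun i hi => ?_
  rw [mem_range] at hi
  congr 2
  omega

/-- MacMahon's number of plane partitions in an `a × b × c` box. -/
def macMahon (a b c : ℕ) : ℚ :=
  prodFactorials a * prodFactorials b * prodFactorials c * prodFactorials (a + b + c) /
    (prodFactorials (a + b) * prodFactorials (a + c) * prodFactorials (b + c))

theorem det_hankel_eq_macMahon (d e N : ℕ) :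
    (of fun i j : Fin N => binomQ (d + e) ((d : ℤ) - ((i : ℕ) + 1) + ((j : ℕ) + 1))).det =
      macMahon d e N := by
  have h := det_hankel_mul_prod d e N
  rw [prod_mul_distrib, prod_mul_distrib, prod_range_factorial_reflect, prod_range_factorial_add,
    prod_range_factorial_reflect, ← prodFactorials] at h
  rw [eq_div_of_mul_eq (by simp [prodFactorials_ne_zero]) h, macMahon]
  field_simp [prodFactorials_ne_zero]

theorem macMahon_eq_prod_range (a b c : ℕ) :
    macMahon a b c = ∏ i ∈ range a,
      (i ! * (b + c + i)! : ℚ) / ((c + a - 1 - i)! * (b + a - 1 - i)!) := by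
  rw [prod_div_distrib, prod_mul_distrib, prod_mul_distrib, prod_range_factorial_add,
    prod_range_factorial_reflect, prod_range_factorial_reflect, ← prodFactorials, macMahon]
  field_simp [prodFactorials_ne_zero]
  ring_nf

theorem hankel_binomial_det_general (n m d : ℕ) (hdm : d < m) (hdn : d < n) :
    (Matrix.of fun i j : Fin (m - d) =>
        binomQ n ((d : ℤ) - ((i : ℕ) + 1) + ((j : ℕ) + 1))).det =
      ∏ i ∈ Finset.range d,
        ((i.factorial : ℚ) * ((m + n - 2 * d - 1 + i + 1).factorial : ℚ)) /
          (((m - i - 1).factorial : ℚ) * ((n - i - 1).factorial : ℚ)) := by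
  obtain ⟨N, rfl⟩ := exists_add_of_le hdm.le
  obtain ⟨e, rfl⟩ := exists_add_of_le hdn.le
  rw [Nat.add_sub_cancel_left, det_hankel_eq_macMahon, macMahon_eq_prod_range]
  refine prod_congr rfl fun i hi => ?_
  rw [mem_range] at hi
  congr 4 <;> omega

/-- Evaluation of the binomial Hankel determinant `det (C(n, d-i+j))_{1≤i,j≤m-d}`. -/
theorem hankel_binomial_det (n m d : ℕ) (hd : 0 < d) (hdm : d < m) (hdn : d < n) :
    (Matrix.of fun i j : Fin (m - d) =>
        binomQ n ((d : ℤ) - ((i : ℕ) + 1) + ((j : ℕ) + 1))).det =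
      ∏ i ∈ Finset.range d,
        ((i.factorial : ℚ) * ((m + n - 2 * d - 1 + i + 1).factorial : ℚ)) /
          (((m - i - 1).factorial : ℚ) * ((n - i - 1).factorial : ℚ)) :=
  hankel_binomial_det_general n m d hdm hdn
end

section
/- Let m, n, d be natural numbers with 0 < d < min(m,n) and c = m+n-2d-1. Then the d×d matrix with entries C(c, m-i-j) for 1 ≤ i,j ≤ d (with C(c,k)=0 for k<0 or k>c) is invertible over ℚ; in particular its determinant (-1)^(d(d-1)/2)·∏_{i=1}^{d}((i-1)!(c+i-1)!)/((m-i-1)!(n-i)!) is nonzero. -/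
/-!
Reversing the columns turns the Hankel matrix into the Toeplitz matrix `(C(a+b, a+j-i))_{i,j<d}`
with `a = m-d-1`, `b = n-d`, at the cost of the sign of the reversal. Scaling row `i` by
`(a+d-1-i)! (b+i)! / (a+b)!` makes the entry in column `j` the value at `x = i` of the polynomial
`(a+j+1-x)^(d-1-j, rising) · (x+b)^(j, falling)`, of degree `d-1`. For such evaluation matrices,
adding to each column its right neighbour divides out a factor `a+b+1` and leaves polynomials of the
same shape for `d-1` in all columns but the last, whose polynomial is monic of degree `d`. Replacing
the last row by the `d`-th forward difference at `0` of the rows then kills the first `d` entries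
(degree `< d`) and leaves `d!`, so a Laplace expansion closes the induction.
-/

open Finset

open Polynomial
open scoped Nat

section

variable {R : Type*} [CommRing R]

theorem Matrix.det_of_lastCases_add_succ {d : ℕ} (A : Matrix (Fin (d + 1)) (Fin (d + 1)) R) :
    (Matrix.of fun i => Fin.lastCases (A i (Fin.last d)) fun j => A i j.castSucc + A i j.succ).det =
      A.det := by
  let U : Matrix (Fin (d + 1)) (Fin (d + 1)) R := Matrix.of fun t =>
    Fin.lastCases (if t = Fin.last d then 1 else 0) fun j =>
      (if t = j.castSucc then 1 else 0) + if t = j.succ then 1 else 0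
  have hU : U.IsLowerTriangular := by
    intro t j htj
    rw [OrderDual.toDual_lt_toDual, Fin.lt_def] at htj
    induction j using Fin.lastCases with
    | last =>
      simp only [Fin.val_last] at htj
      simp [U, Fin.ext_iff, htj.ne]
    | cast j =>
      simp only [Fin.val_castSucc] at htj
      simp [U, Fin.ext_iff, htj.ne, show (t : ℕ) ≠ j + 1 by omega]
  have hUdet : U.det = 1 := by
    rw [Matrix.det_of_isLowerTriangular U hU]
    refine prod_eq_one fun t _ => ?_
    induction t using Fin.lastCases with
    | last => simp [U]
    | cast j => simp [U, Fin.ext_iff]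
  rw [← mul_one A.det, ← hUdet, ← Matrix.det_mul]
  congr 1
  ext i j
  induction j using Fin.lastCases with
  | last => simp [U, Matrix.mul_apply]
  | cast j => simp [U, Matrix.mul_apply, mul_add, sum_add_distrib]

theorem fwdDiff_iter_eval_zero_eq_sum (d : ℕ) (p : R[X]) :
    (fwdDiff 1)^[d] (fun x => p.eval x) 0 =
      ∑ k : Fin (d + 1), ((-1 : R) ^ (d - k) * d.choose k) * p.eval (k : R) := by
  rw [fwdDiff_iter_eq_sum_shift, ← Fin.sum_univ_eq_sum_range]
  simp [zsmul_eq_mul]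

theorem Matrix.det_eval_natCast_succ {d : ℕ} (p : Fin (d + 1) → R[X])
    (hlow : ∀ j : Fin d, (p j.castSucc).natDegree < d) (hmonic : (p (Fin.last d)).Monic)
    (hdeg : (p (Fin.last d)).natDegree = d) :
    (Matrix.of fun i j : Fin (d + 1) => (p j).eval ((i : ℕ) : R)).det =
      d ! * (Matrix.of fun i j : Fin d => (p j.castSucc).eval ((i : ℕ) : R)).det := by
  set A := Matrix.of fun i j : Fin (d + 1) => (p j).eval ((i : ℕ) : R)
  let w : Fin (d + 1) → R := fun k => (-1) ^ (d - k) * d.choose k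
  set B := A.updateRow (Fin.last d) (∑ k, w k • A k)
  have hB : B.det = A.det := by
    rw [Matrix.det_updateRow_sum]
    simp [w]
  have hlast (j) : B (Fin.last d) j = (fwdDiff 1)^[d] (fun x => (p j).eval x) 0 := by
    simp [B, A, w, fwdDiff_iter_eval_zero_eq_sum]
  have hzero (j : Fin d) : B (Fin.last d) j.castSucc = 0 := by
    rw [hlast, fwdDiff_iter_eq_zero_of_degree_lt (hlow j), Pi.zero_apply]
  have hfact : B (Fin.last d) (Fin.last d) = d ! := by
    have h := fwdDiff_iter_degree_eq_factorial (p (Fin.last d))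
    rw [hdeg, hmonic.leadingCoeff, one_smul] at h
    rw [hlast, h]
    rfl
  rw [← hB, Matrix.det_succ_row B (Fin.last d), Fin.sum_univ_castSucc]
  simp only [hzero, hfact, mul_zero, zero_mul, sum_const_zero, zero_add, Fin.val_last,
    ← two_mul, pow_mul, neg_one_sq, one_pow, one_mul, Fin.succAbove_last]
  congr 2
  ext i j
  simp [B, A, (Fin.castSucc_lt_last i).ne]

noncomputable def hankelColumnPoly (d : ℕ) (a b : R) (j : ℕ) : R[X] :=
  (ascPochhammer R (d - 1 - j)).comp (C (a + j + 1) - X) * (descPochhammer R j).comp (X + C b)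

theorem hankelColumnPoly_add_succ {d j : ℕ} (hj : j < d) (a b : R) :
    hankelColumnPoly (d + 1) a b j + hankelColumnPoly (d + 1) a b (j + 1) =
      C (a + b + 1) * hankelColumnPoly d (a + 1) b j := by
  obtain ⟨k, rfl⟩ : ∃ k, d = j + 1 + k := ⟨d - (j + 1), by omega⟩
  have hlen : j + 1 + k + 1 - 1 - j = k + 1 := by omega
  have hlen' : j + 1 + k + 1 - 1 - (j + 1) = k := by omega
  have hlen'' : j + 1 + k - 1 - j = k := by omega
  have hshift : (C (a + j + 1) - X + 1 : R[X]) = C (a + ↑(j + 1) + 1) - X := by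
    simp only [Nat.cast_add, Nat.cast_one, C_add, C_1]
    ring
  have hshift' : (C (a + 1 + j + 1) : R[X]) = C (a + ↑(j + 1) + 1) := by
    push_cast
    ring_nf
  simp only [hankelColumnPoly, hlen, hlen', hlen'', ascPochhammer_succ_left,
    descPochhammer_succ_right, mul_comp, X_comp, comp_assoc, add_comp, one_comp, sub_comp,
    natCast_comp, hshift, hshift']
  simp only [C_add, C_1, C_eq_natCast]
  ring

theorem hankelColumnPoly_self (d : ℕ) (a b : R) :
    hankelColumnPoly (d + 1) a b d = (descPochhammer R d).comp (X + C b) := by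
  simp [hankelColumnPoly]

variable [IsDomain R]

theorem natDegree_hankelColumnPoly_lt {d j : ℕ} (hj : j < d) (a b : R) :
    (hankelColumnPoly d a b j).natDegree < d := by
  refine natDegree_mul_le.trans_lt ?_
  rw [natDegree_comp, natDegree_comp, ascPochhammer_natDegree, descPochhammer_natDegree,
    natDegree_X_add_C, natDegree_sub_eq_right_of_natDegree_lt
      (by rw [natDegree_C, natDegree_X]; exact one_pos), natDegree_X]
  omega

theorem monic_hankelColumnPoly_self (d : ℕ) (a b : R) :
    (hankelColumnPoly (d + 1) a b d).Monic := by
  rw [hankelColumnPoly_self]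
  exact (monic_descPochhammer R d).comp_X_add_C b

theorem natDegree_hankelColumnPoly_self (d : ℕ) (a b : R) :
    (hankelColumnPoly (d + 1) a b d).natDegree = d := by
  rw [hankelColumnPoly_self, natDegree_comp, descPochhammer_natDegree, natDegree_X_add_C, mul_one]

theorem det_hankelColumnPoly_eval (d : ℕ) (a b : R) :
    (Matrix.of fun i j : Fin d => (hankelColumnPoly d a b j).eval ((i : ℕ) : R)).det =
      ∏ i ∈ range d, (i ! : R) * (ascPochhammer R i).eval (a + b + 1) := by
  induction d generalizing a with
  | zero => simp
  | succ d ih =>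
    let q : Fin (d + 1) → R[X] := Fin.lastCases (hankelColumnPoly (d + 1) a b d) fun j =>
      C (a + b + 1) * hankelColumnPoly d (a + 1) b j
    have hq_last : q (Fin.last d) = hankelColumnPoly (d + 1) a b d := Fin.lastCases_last
    have hq_cast (j : Fin d) : q j.castSucc = C (a + b + 1) * hankelColumnPoly d (a + 1) b j :=
      Fin.lastCases_castSucc j
    have hcolumns : (Matrix.of fun i j : Fin (d + 1) =>
        (hankelColumnPoly (d + 1) a b j).eval ((i : ℕ) : R)).det =
        (Matrix.of fun i j : Fin (d + 1) => (q j).eval ((i : ℕ) : R)).det := by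
      rw [← Matrix.det_of_lastCases_add_succ]
      congr 1
      ext i j
      induction j using Fin.lastCases with
      | last => simp [hq_last]
      | cast j =>
        simp only [Matrix.of_apply, Fin.lastCases_castSucc, Fin.val_castSucc, Fin.val_succ,
          hq_cast, ← eval_add, hankelColumnPoly_add_succ j.isLt]
    have hlow (j : Fin d) : (q j.castSucc).natDegree < d := by
      rw [hq_cast]
      exact (natDegree_C_mul_le _ _).trans_lt (natDegree_hankelColumnPoly_lt j.isLt _ _)
    have hsmul : (Matrix.of fun i j : Fin d => (q j.castSucc).eval ((i : ℕ) : R)) =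
        (a + b + 1) • Matrix.of fun i j : Fin d =>
          (hankelColumnPoly d (a + 1) b j).eval ((i : ℕ) : R) := by
      ext i j
      simp [hq_cast]
    have hab : a + 1 + b + 1 = a + b + 1 + 1 := by ring
    rw [hcolumns, Matrix.det_eval_natCast_succ q hlow
      (hq_last ▸ monic_hankelColumnPoly_self d a b)
      (hq_last ▸ natDegree_hankelColumnPoly_self d a b), hsmul, Matrix.det_smul, ih,
      Fintype.card_fin, hab, prod_mul_distrib, prod_mul_distrib,
      prod_range_succ (fun i => (i ! : R)), prod_range_succ' (fun i => (ascPochhammer R i).eval _)]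
    simp only [ascPochhammer_succ_left, eval_mul, eval_X, eval_comp, eval_add, eval_one,
      prod_mul_distrib, prod_const, card_range, ascPochhammer_zero]
    ring

end

theorem factorial_mul_binomQ_eq (a b : ℕ) {d i j : ℕ} (hi : i < d) (hj : j < d) :
    ((a + (d - 1 - i))! * (b + i)! : ℚ) * binomQ (a + b) ((a : ℤ) + j - i) =
      (a + b)! * (hankelColumnPoly d (a : ℚ) b j).eval (i : ℚ) := by
  simp only [hankelColumnPoly, eval_mul, eval_comp, eval_sub, eval_add, eval_C, eval_X]
  by_cases hneg : a + j < i
  · obtain ⟨k, hk⟩ : ∃ k, i = a + j + 1 + k := ⟨i - (a + j + 1), by omega⟩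
    have hroot : (a : ℚ) + j + 1 - i = -(k : ℚ) := by
      rw [hk]
      push_cast
      ring
    rw [binomQ, if_neg (by omega), hroot, ascPochhammer_eval_neg_coe_nat_of_lt (by omega)]
    simp
  obtain ⟨k, hk⟩ : ∃ k, a + j = i + k := ⟨a + j - i, by omega⟩
  have hpoint : (a : ℚ) + j + 1 - i = ((k + 1 : ℕ) : ℚ) := by
    have : ((a + j : ℕ) : ℚ) = ((i + k : ℕ) : ℚ) := congrArg _ hk
    push_cast at this ⊢
    linarith
  have hpoint' : (i : ℚ) + b = ((i + b : ℕ) : ℚ) := by push_cast; ring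
  rw [binomQ, if_pos (by omega), show (a : ℤ) + j - i = k by omega, Int.toNat_natCast, hpoint,
    hpoint', ascPochhammer_nat_eq_natCast_ascFactorial, descPochhammer_eval_eq_descFactorial]
  rcases lt_or_ge (a + b) k with hbig | hbig
  · rw [Nat.choose_eq_zero_of_lt hbig, Nat.descFactorial_eq_zero_iff_lt.2 (by omega)]
    simp
  have hasc : (a + (d - 1 - i))! = k ! * (k + 1).ascFactorial (d - 1 - j) := by
    rw [Nat.factorial_mul_ascFactorial]
    congr 1
    omega
  have hdesc : (b + i)! = (a + b - k)! * (i + b).descFactorial j := by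
    rw [show a + b - k = i + b - j by omega, Nat.factorial_mul_descFactorial (by omega), add_comm]
  rw [hasc, hdesc, ← Nat.choose_mul_factorial_mul_factorial hbig]
  push_cast
  ring

/-- MacMahon's formula for the number of plane partitions in an `a × b × d` box. -/
theorem det_binomQ_toeplitz (a b d : ℕ) :
    (Matrix.of fun i j : Fin d => binomQ (a + b) ((a : ℤ) + (j : ℕ) - (i : ℕ))).det =
      ∏ i ∈ range d, (i ! * (a + b + i)! : ℚ) / ((a + i)! * (b + i)!) := by
  set T := Matrix.of fun i j : Fin d => binomQ (a + b) ((a : ℤ) + (j : ℕ) - (i : ℕ))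
  have hscale : (Matrix.of fun i j : Fin d => ((a + (d - 1 - i))! * (b + i)! : ℚ) * T i j) =
      ((a + b)! : ℚ) • Matrix.of fun i j : Fin d =>
        (hankelColumnPoly d (a : ℚ) b j).eval ((i : ℕ) : ℚ) := by
    ext i j
    exact factorial_mul_binomQ_eq a b i.isLt j.isLt
  have hrows : ∏ i : Fin d, ((a + (d - 1 - i))! * (b + i)! : ℚ) =
      ∏ i ∈ range d, ((a + i)! * (b + i)! : ℚ) := by
    rw [Fin.prod_univ_eq_prod_range (fun i => ((a + (d - 1 - i))! * (b + i)! : ℚ)),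
      prod_mul_distrib, prod_mul_distrib, prod_range_reflect (fun i => ((a + i)! : ℚ))]
  have hcolumns : ((a + b)! : ℚ) ^ d *
      ∏ i ∈ range d, (i ! : ℚ) * (ascPochhammer ℚ i).eval ((a : ℚ) + b + 1) =
      ∏ i ∈ range d, (i ! * (a + b + i)! : ℚ) := by
    rw [← card_range d, ← prod_const, card_range, ← prod_mul_distrib]
    refine prod_congr rfl fun i _ => ?_
    rw [show (a : ℚ) + b + 1 = ((a + b + 1 : ℕ) : ℚ) by push_cast; ring,
      ascPochhammer_nat_eq_natCast_ascFactorial, ← Nat.factorial_mul_ascFactorial (a + b) i]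
    push_cast
    ring
  have hdet := congrArg Matrix.det hscale
  rw [Matrix.det_mul_column, Matrix.det_smul, det_hankelColumnPoly_eval, Fintype.card_fin,
    hcolumns, hrows] at hdet
  rw [prod_div_distrib, eq_div_iff (prod_ne_zero_iff.2 fun i _ => by positivity), ← hdet,
    mul_comm]

theorem Fin.revPerm_succ_eq (n : ℕ) :
    (Fin.revPerm : Equiv.Perm (Fin (n + 1))) =
      Equiv.Perm.decomposeFin.symm (0, Fin.revPerm) * finRotate (n + 1) := by
  ext i
  induction i using Fin.lastCases with
  | last => simp
  | cast j =>
    have : finRotate (n + 1) j.castSucc = j.succ := by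
      rw [finRotate_apply, Fin.coeSucc_eq_succ]
    simp [this, Fin.rev_castSucc]

theorem Fin.sign_revPerm (n : ℕ) :
    Equiv.Perm.sign (Fin.revPerm : Equiv.Perm (Fin n)) = (-1) ^ (n * (n - 1) / 2) := by
  induction n with
  | zero => rfl
  | succ n ih =>
    rw [Fin.revPerm_succ_eq, map_mul, Equiv.Perm.decomposeFin.symm_sign, sign_finRotate, ih,
      if_pos rfl, one_mul, Nat.add_sub_cancel, ← pow_add]
    congr 1
    rcases n with _ | n
    · rfl
    · rw [show (n + 1 + 1) * (n + 1) = (n + 1) * n + 2 * (n + 1) by ring,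
        Nat.add_mul_div_left _ _ two_pos, Nat.add_sub_cancel]

theorem Matrix.det_submatrix_revPerm {R : Type*} [CommRing R] {d : ℕ}
    (M : Matrix (Fin d) (Fin d) R) :
    (M.submatrix id Fin.revPerm).det = (-1) ^ (d * (d - 1) / 2) * M.det := by
  rw [Matrix.det_permute', Fin.sign_revPerm]
  push_cast
  rfl

theorem hankel_submatrix_invertible_general (m n d : ℕ) (hdm : d < m) (hdn : d < n) :
    IsUnit (Matrix.of fun i j : Fin d =>
        binomQ (m + n - 2 * d - 1) ((m : ℤ) - ((i : ℕ) + 1) - ((j : ℕ) + 1))) ∧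
      (Matrix.of fun i j : Fin d =>
          binomQ (m + n - 2 * d - 1) ((m : ℤ) - ((i : ℕ) + 1) - ((j : ℕ) + 1))).det =
        (-1) ^ (d * (d - 1) / 2) *
          ∏ i ∈ Finset.range d,
            ((i.factorial : ℚ) * ((m + n - 2 * d - 1 + i).factorial : ℚ)) /
              (((m - i - 2).factorial : ℚ) * ((n - i - 1).factorial : ℚ)) ∧
      ((-1 : ℚ) ^ (d * (d - 1) / 2) *
          ∏ i ∈ Finset.range d,
            ((i.factorial : ℚ) * ((m + n - 2 * d - 1 + i).factorial : ℚ)) /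
              (((m - i - 2).factorial : ℚ) * ((n - i - 1).factorial : ℚ))) ≠ 0 := by
  set M := Matrix.of fun i j : Fin d =>
    binomQ (m + n - 2 * d - 1) ((m : ℤ) - ((i : ℕ) + 1) - ((j : ℕ) + 1))
  have hc : m + n - 2 * d - 1 = (m - d - 1) + (n - d) := by omega
  have htoeplitz : M = (Matrix.of fun i j : Fin d => binomQ ((m - d - 1) + (n - d))
      (((m - d - 1 : ℕ) : ℤ) + (j : ℕ) - (i : ℕ))).submatrix id Fin.revPerm := by
    ext i j
    simp only [M, hc, Matrix.submatrix_apply, id_eq, Matrix.of_apply, Fin.revPerm_apply,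
      Fin.val_rev]
    congr 1
    omega
  have hprod : ∏ i ∈ range d, (i ! * ((m - d - 1) + (n - d) + i)! : ℚ) /
      ((m - d - 1 + i)! * (n - d + i)!) = ∏ i ∈ range d, ((i ! : ℚ) *
        (m + n - 2 * d - 1 + i)!) / ((m - i - 2)! * (n - i - 1)!) := by
    rw [prod_div_distrib, prod_div_distrib, hc, ← prod_range_reflect (fun i =>
      ((m - d - 1 + i)! * (n - d + i)! : ℚ))]
    congr 1
    refine prod_congr rfl fun i hi => ?_
    rw [mem_range] at hi
    rw [show m - d - 1 + (d - 1 - i) = m - i - 2 by omega,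
      show n - d + (d - 1 - i) = n - i - 1 by omega]
  have hdet : M.det = (-1) ^ (d * (d - 1) / 2) * ∏ i ∈ range d, ((i ! : ℚ) *
      (m + n - 2 * d - 1 + i)!) / ((m - i - 2)! * (n - i - 1)!) := by
    rw [htoeplitz, Matrix.det_submatrix_revPerm, det_binomQ_toeplitz, hprod]
  have hne : ((-1 : ℚ) ^ (d * (d - 1) / 2) * ∏ i ∈ range d, ((i ! : ℚ) *
      (m + n - 2 * d - 1 + i)!) / ((m - i - 2)! * (n - i - 1)!)) ≠ 0 :=
    mul_ne_zero (pow_ne_zero _ (by norm_num)) (prod_pos fun i _ => by positivity).ne'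
  exact ⟨(Matrix.isUnit_iff_isUnit_det M).2 (hdet ▸ hne.isUnit), hdet, hne⟩

/-- The `d × d` binomial Hankel matrix `(C(c, m-i-j))_{1≤i,j≤d}` is invertible over `ℚ`;
in particular its determinant `(-1)^(d(d-1)/2)·∏_{i=1}^d (i-1)!(c+i-1)!/((m-i-1)!(n-i)!)`
is nonzero. -/
theorem hankel_submatrix_invertible (m n d : ℕ) (hd : 0 < d) (hdm : d < m) (hdn : d < n) :
    IsUnit (Matrix.of fun i j : Fin d =>
        binomQ (m + n - 2 * d - 1) ((m : ℤ) - ((i : ℕ) + 1) - ((j : ℕ) + 1))) ∧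
      (Matrix.of fun i j : Fin d =>
          binomQ (m + n - 2 * d - 1) ((m : ℤ) - ((i : ℕ) + 1) - ((j : ℕ) + 1))).det =
        (-1) ^ (d * (d - 1) / 2) *
          ∏ i ∈ Finset.range d,
            ((i.factorial : ℚ) * ((m + n - 2 * d - 1 + i).factorial : ℚ)) /
              (((m - i - 2).factorial : ℚ) * ((n - i - 1).factorial : ℚ)) ∧
      ((-1 : ℚ) ^ (d * (d - 1) / 2) *
          ∏ i ∈ Finset.range d,
            ((i.factorial : ℚ) * ((m + n - 2 * d - 1 + i).factorial : ℚ)) /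
              (((m - i - 2).factorial : ℚ) * ((n - i - 1).factorial : ℚ))) ≠ 0 :=
  hankel_submatrix_invertible_general m n d hdm hdn
end

section
/- Let m, n, d be natural numbers with 0 < d < min(m,n), c = m+n-2d-1, and set p(m) = (-1)^(d(d-1)/2)·∏_{i=1}^{d} ((i-1)!(c+i-1)!)/((m-i-1)!(n-i)!) (a function of m with n, d fixed, so that incrementing m also increments c). Then ∑_{j=0}^{d} C(d,j)·C(n-d+j-1,j)/C(m-1,j) · p(m) = p(m+1), i.e., (∑_{j=0}^{d} C(d,j)·C(n-d+j-1,j)/C(m-1,j)) · ∏_{i=1}^{d} (c+i-1)!/(m-i-1)! = ∏_{i=1}^{d} (c+i)!/(m-i)!. -/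
/-!
Write `M = m - 1` and `a = n - d - 1`, so that `c + d = a + M + 1`. Since
`C(d,j) C(M,d) / C(M,j) = C(M-j, d-j)`, the sum times `C(M,d)` is the convolution
`∑ C(a+j, j) C(M-j, d-j)`, the coefficient of `X^d` in
`(1-X)^-(a+1) (1-X)^-(M-d+1) = (1-X)^-(a+M-d+2)`, namely `C(a+M+1, d)`.
On the product side, the `i`-th factors of the two products differ by `(c+i+1)/(M-i)`,
and these ratios multiply to `C(c+d, d) / C(M, d)` as well.
-/

open Finset

theorem Nat.sum_antidiagonal_add_choose_mul_add_choose (r s k : ℕ) :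
    ∑ ij ∈ antidiagonal k, (r + ij.1).choose ij.1 * (s + ij.2).choose ij.2 =
      (r + s + k + 1).choose k := by
  have h := congrArg (PowerSeries.coeff k)
    (pow_add (PowerSeries.mk 1 : PowerSeries ℤ) (r + 1) (s + 1))
  rw [show r + 1 + (s + 1) = r + s + 1 + 1 by ring, PowerSeries.mk_one_pow_eq_mk_choose_add,
    PowerSeries.mk_one_pow_eq_mk_choose_add, PowerSeries.mk_one_pow_eq_mk_choose_add,
    PowerSeries.coeff_mul] at h
  simp only [PowerSeries.coeff_mk] at h
  have h' : ∑ ij ∈ antidiagonal k, (r + ij.1).choose r * (s + ij.2).choose s =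
      (r + s + 1 + k).choose (r + s + 1) := by exact_mod_cast h.symm
  rw [add_right_comm, ← Nat.choose_symm_add, ← h']
  exact sum_congr rfl fun ij _ => by rw [Nat.choose_symm_add, Nat.choose_symm_add]

theorem Nat.cast_choose_div_choose_mul_choose {M d j : ℕ} (hjd : j ≤ d) (hdM : d ≤ M) :
    (d.choose j : ℚ) / M.choose j * M.choose d = (M - j).choose (d - j) := by
  have hM : (M.choose j : ℚ) ≠ 0 := by exact_mod_cast (Nat.choose_pos (hjd.trans hdM)).ne'
  rw [div_mul_eq_mul_div, div_eq_iff hM]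
  exact_mod_cast (mul_comm _ _).trans ((Nat.choose_mul hjd).trans (mul_comm _ _))

theorem sum_choose_mul_add_choose_div_choose (a : ℕ) {M d : ℕ} (hdM : d ≤ M) :
    ∑ j ∈ range (d + 1), (d.choose j : ℚ) * (a + j).choose j / M.choose j =
      (a + M + 1).choose d / M.choose d := by
  have hM : (M.choose d : ℚ) ≠ 0 := by exact_mod_cast (Nat.choose_pos hdM).ne'
  have hterm : ∀ j ∈ range (d + 1), (d.choose j : ℚ) * (a + j).choose j / M.choose j * M.choose d
      = ((a + j).choose j * (M - d + (d - j)).choose (d - j) : ℕ) := fun j hj => by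
    have hjd : j ≤ d := Nat.lt_succ_iff.mp (mem_range.mp hj)
    rw [mul_comm (d.choose j : ℚ), mul_div_assoc, mul_assoc,
      Nat.cast_choose_div_choose_mul_choose hjd hdM, show M - d + (d - j) = M - j by omega]
    push_cast
    ring
  rw [eq_div_iff hM, sum_mul, sum_congr rfl hterm, ← Nat.cast_sum,
    ← Nat.sum_antidiagonal_eq_sum_range_succ_mk
      (fun ij => (a + ij.1).choose ij.1 * (M - d + ij.2).choose ij.2),
    Nat.sum_antidiagonal_add_choose_mul_add_choose, show a + (M - d) + d + 1 = a + M + 1 by omega]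

theorem prod_range_add_succ_div_sub_eq_choose_div_choose (c M d : ℕ) :
    ∏ i ∈ range d, ((c + i + 1 : ℕ) : ℚ) / ((M - i : ℕ) : ℚ) = (c + d).choose d / M.choose d := by
  have hd : (d.factorial : ℚ) ≠ 0 := by exact_mod_cast d.factorial_ne_zero
  rw [prod_div_distrib, ← Nat.cast_prod, ← Nat.cast_prod, ← Nat.descFactorial_eq_prod_range,
    Nat.descFactorial_eq_factorial_mul_choose]
  simp only [add_right_comm c _ 1]
  rw [← Nat.ascFactorial_eq_prod_range, Nat.ascFactorial_eq_factorial_mul_choose]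
  push_cast
  exact mul_div_mul_left _ _ hd

theorem factorial_succ_div_factorial_succ (k l : ℕ) :
    ((k + 1).factorial : ℚ) / (l + 1).factorial =
      k.factorial / l.factorial * ((k + 1 : ℕ) / (l + 1 : ℕ)) := by
  push_cast [Nat.factorial_succ]
  field_simp

theorem prod_range_factorial_succ_div_factorial (c M d : ℕ) (hdM : d ≤ M) :
    ∏ i ∈ range d, ((c + i + 1).factorial : ℚ) / (M - i).factorial =
      (∏ i ∈ range d, ((c + i).factorial : ℚ) / (M - i - 1).factorial) *
        ((c + d).choose d / M.choose d) := by
  rw [← prod_range_add_succ_div_sub_eq_choose_div_choose, ← prod_mul_distrib]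
  refine prod_congr rfl fun i hi => ?_
  obtain ⟨l, hl⟩ : ∃ l, M - i = l + 1 := ⟨M - i - 1, by have := mem_range.mp hi; omega⟩
  rw [hl, Nat.add_sub_cancel, factorial_succ_div_factorial_succ]

theorem sum_k_j_identity_general (m n d : ℕ) (hdm : d < m) (hdn : d < n) :
    (∑ j ∈ Finset.range (d + 1),
        (d.choose j : ℚ) * ((n - d + j - 1).choose j : ℚ) / ((m - 1).choose j : ℚ)) *
      ∏ i ∈ Finset.range d,
        ((m + n - 2 * d - 1 + i).factorial : ℚ) / ((m - i - 2).factorial : ℚ) =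
    ∏ i ∈ Finset.range d,
      ((m + n - 2 * d - 1 + i + 1).factorial : ℚ) / ((m - i - 1).factorial : ℚ) := by
  have hdM : d ≤ m - 1 := by omega
  have hsum : ∑ j ∈ range (d + 1),
      (d.choose j : ℚ) * ((n - d + j - 1).choose j : ℚ) / ((m - 1).choose j : ℚ) =
        (m + n - 2 * d - 1 + d).choose d / (m - 1).choose d := by
    rw [show m + n - 2 * d - 1 + d = n - d - 1 + (m - 1) + 1 by omega,
      ← sum_choose_mul_add_choose_div_choose _ hdM]
    exact sum_congr rfl fun j _ => by rw [show n - d + j - 1 = n - d - 1 + j by omega]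
  simp only [show ∀ i, m - i - 1 = m - 1 - i from fun i => by omega,
    show ∀ i, m - i - 2 = m - 1 - i - 1 from fun i => by omega]
  rw [hsum, prod_range_factorial_succ_div_factorial _ _ _ hdM, mul_comm]

/-- The combinatorial identity combining `q_j = (C(d,j)C(n-d+j-1,j)/C(m-1,j))·q_0(m,n,d)`
and `∑_j q_j(m,n,d) = q_0(m+1,n,d)`: with `c = m+n-2d-1`,
`(∑_j C(d,j)C(n-d+j-1,j)/C(m-1,j)) · ∏_{i=1}^d (c+i-1)!/(m-i-1)! = ∏_{i=1}^d (c+i)!/(m-i)!`. -/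
theorem sum_k_j_identity (m n d : ℕ) (hd : 0 < d) (hdm : d < m) (hdn : d < n) :
    (∑ j ∈ Finset.range (d + 1),
        (d.choose j : ℚ) * ((n - d + j - 1).choose j : ℚ) / ((m - 1).choose j : ℚ)) *
      ∏ i ∈ Finset.range d,
        ((m + n - 2 * d - 1 + i).factorial : ℚ) / ((m - i - 2).factorial : ℚ) =
    ∏ i ∈ Finset.range d,
      ((m + n - 2 * d - 1 + i + 1).factorial : ℚ) / ((m - i - 1).factorial : ℚ) :=
  sum_k_j_identity_general m n d hdm hdn
end
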